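/- Let n ≥ 1 and let i < k be positive integers. Let a_i < a_{i+1} < … < a_k be integers with a_{s+1} = a_s + 1 for all i ≤ s ≤ k−1, s ≤ a_s ≤ n for all s, and set w' = (s_{a_i} ⋯ s_i)(s_{a_{i+1}} ⋯ s_{i+1}) ⋯ (s_{a_k} ⋯ s_k) in S_{n+1}. Then for every integer t with i ≤ t ≤ a_k and t ≠ k, there exists an integer l with 1 ≤ l ≤ n and l ≠ a_i such that w' · s_t = s_l · w'. -/
import Mathlib


/-- The adjacent transposition `s j = (j, j+1)`, realized inside `Equiv.Perm ℕ`
(the subgroup permuting `{1,…,n+1}` is the symmetric group `S_{n+1}`). -/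
def adjTrans (j : ℕ) : Equiv.Perm ℕ := Equiv.swap j (j + 1)

/-- The product `s_a s_{a-1} ⋯ s_b` with decreasing indices from `a` down to `b`. -/
def decProd (b a : ℕ) : Equiv.Perm ℕ :=
  ((List.range' b (a + 1 - b)).reverse.map adjTrans).prod

lemma decProd_rec (b m : ℕ) : decProd b (b + m + 1) = adjTrans (b + m + 1) * decProd b (b + m) := by
  unfold decProd
  have h1 : b + m + 1 + 1 - b = (b + m + 1 - b) + 1 := by omega
  rw [h1, List.range'_concat]
  have h2 : b + 1 * (b + m + 1 - b) = b + m + 1 := by omega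
  rw [show b + 1 * (b + m + 1 - b) = b + m + 1 by omega]
  simp

lemma decProd_apply (b m : ℕ) : ∀ x, decProd b (b + m) x =
    if x = b then b + m + 1 else if b < x ∧ x ≤ b + m + 1 then x - 1 else x := by
  induction m with
  | zero =>
    intro x
    have : b + 0 + 1 - b = 1 := by omega
    simp only [decProd, this, List.range'_one, List.reverse_cons, List.reverse_nil,
      List.nil_append, List.map_cons, List.map_nil, List.prod_cons, List.prod_nil, mul_one]
    simp only [adjTrans, Equiv.swap_apply_def]
    split_ifs <;> omega
  | succ m ih =>
    intro x
    rw [show b + (m + 1) = b + m + 1 from rfl, decProd_rec, Equiv.Perm.mul_apply, ih,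
      adjTrans, Equiv.swap_apply_def]
    split_ifs <;> omega

lemma key (i D : ℕ) : ∀ m, i ≤ m → ∀ x,
    (((List.range' i (m + 1 - i)).map (fun u => decProd u (u + D))).prod) x =
      if x < i then x
      else if x ≤ m then x + D + 1
      else if x ≤ m + D + 1 then x - (m + 1 - i) else x := by
  intro m hm
  induction m, hm using Nat.le_induction with
  | base =>
    intro x
    have : i + 1 - i = 1 := by omega
    simp only [this, List.range'_one, List.map_cons, List.map_nil, List.prod_cons,
      List.prod_nil, mul_one, decProd_apply]
    split_ifs <;> omega
  | succ m hm ih =>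
    intro x
    have h1 : m + 1 + 1 - i = (m + 1 - i) + 1 := by omega
    have h2 : i + 1 * (m + 1 - i) = m + 1 := by omega
    rw [h1, List.range'_concat, h2, List.map_append, List.prod_append, List.map_cons,
      List.map_nil, List.prod_cons, List.prod_nil, mul_one, Equiv.Perm.mul_apply,
      show m + 1 + D = (m+1) + D from rfl, decProd_apply, ih]
    split_ifs <;> omega

theorem stmt4 (n i k : ℕ) (a : ℕ → ℕ) (hn : 1 ≤ n) (hi : 1 ≤ i) (hik : i < k)
    (hstep : ∀ t, i ≤ t → t ≤ k - 1 → a (t + 1) = a t + 1)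
    (hbound : ∀ t, i ≤ t → t ≤ k → t ≤ a t ∧ a t ≤ n) :
    ∀ t, i ≤ t → t ≤ a k → t ≠ k →
      ∃ l, 1 ≤ l ∧ l ≤ n ∧ l ≠ a i ∧
        (((List.range' i (k + 1 - i)).map (fun u => decProd u (a u))).prod) * adjTrans t
          = adjTrans l * (((List.range' i (k + 1 - i)).map (fun u => decProd u (a u))).prod) := by
  intro t ht htak htk
  have hAi := hbound i le_rfl (le_of_lt hik)
  set D := a i - i with hD
  have ha : ∀ u, i ≤ u → u ≤ k → a u = u + D := by
    intro u hu
    induction u, hu using Nat.le_induction with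
    | base => intro _; omega
    | succ u hu ih =>
      intro huk
      rw [hstep u hu (by omega), ih (by omega)]; omega
  have hak : a k = k + D := ha k (le_of_lt hik) le_rfl
  have hmap : (List.range' i (k + 1 - i)).map (fun u => decProd u (a u))
      = (List.range' i (k + 1 - i)).map (fun u => decProd u (u + D)) := by
    apply List.map_congr_left
    intro u hu
    rw [List.mem_range'_1] at hu
    rw [ha u hu.1 (by omega)]
  rw [hmap]
  set w := ((List.range' i (k + 1 - i)).map (fun u => decProd u (u + D))).prod with hw
  have hwapp := key i D k (le_of_lt hik)
  rcases lt_or_gt_of_ne htk with hlt | hgt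
  · -- case t < k : l = t + D + 1
    refine ⟨t + D + 1, by omega, by have := hbound k (le_of_lt hik) le_rfl; omega,
      by omega, ?_⟩
    have h1 : w t = t + D + 1 := by rw [hwapp t]; split_ifs <;> omega
    have h2 : w (t + 1) = t + D + 2 := by rw [hwapp (t+1)]; split_ifs <;> omega
    rw [show adjTrans t = Equiv.swap t (t + 1) from rfl, Equiv.mul_swap_eq_swap_mul, h1, h2]
    rfl
  · -- case t > k : l = t - (k + 1 - i)
    refine ⟨t - (k + 1 - i), by omega, by omega, by omega, ?_⟩
    have h1 : w t = t - (k + 1 - i) := by rw [hwapp t]; split_ifs <;> omega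
    have h2 : w (t + 1) = t - (k + 1 - i) + 1 := by rw [hwapp (t+1)]; split_ifs <;> omega
    rw [show adjTrans t = Equiv.swap t (t + 1) from rfl, Equiv.mul_swap_eq_swap_mul, h1, h2]
    rfl
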